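/- arXiv:1207.4552 — 2 statements merged into one kernel-verified Lean document; each statement's English description precedes it below -/
import Mathlib

section
/- Let τ, r ≥ 0 be constants, A ∈ ℝ^{n×n}, B ∈ ℝ^{n×m}, k ∈ ℝ^{m×n}. Suppose there exist constants Q₀, σ₀ > 0 such that every continuous, locally absolutely continuous function z : [−max(r,τ),∞) → ℝⁿ satisfying ż(t) = (A+Bk) z(t) + B k e^{Ar} (z(t−τ) − z(t−r)) for almost every t ≥ 0 satisfies |z(t)| ≤ Q₀ e^{−σ₀ t} max_{−max(r,τ) ≤ s ≤ 0} |z(s)| for all t ≥ 0. Then the zero solution of the constant-delay closed-loop system is globally exponentially stable: there exist constants Q, σ > 0 such that every solution (x, u) of the constant-delay closed-loop system satisfies |x(t)| + max_{t−max(r,τ) ≤ s ≤ t} |u(s)| ≤ Q e^{−σt} (|x(0)| + max_{−max(r,τ) ≤ s ≤ 0} |u(s)|) for all t ≥ 0. -/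
/-!
Variation of constants along a solution turns the predictor integral at time `t` into
`x(t + τ) - e^{Ar} x(t + τ - r)` as soon as `t + τ ≥ r`. Hence for `t ≥ max r τ` the delayed input
`B u(t - τ)` is an explicit combination of delayed states, and `z(t) = x(t + max r τ)` solves the
comparison system, which decays by hypothesis. On the initial window `[0, max r τ]` the state is
bounded by the initial data through Grönwall's inequality, the input being controlled by earlier
states and by its own history. The same formula bounds `u(t)` by values of `x` on
`[t - max r τ, t + τ]` (plus the history of `u` while `t + τ < r`), which carries the decay of `x`
over to `u`.
-/

open MeasureTheory Set

noncomputable def mv {n m : ℕ} (A : Matrix (Fin n) (Fin m) ℝ)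
    (x : EuclideanSpace ℝ (Fin m)) : EuclideanSpace ℝ (Fin n) :=
  Matrix.toEuclideanLin A x

noncomputable def mexp {n : ℕ} (A : Matrix (Fin n) (Fin n) ℝ) (t : ℝ) :
    Matrix (Fin n) (Fin n) ℝ :=
  NormedSpace.exp (t • A)

section Matrix

variable {p q : ℕ}

noncomputable def mvL : Matrix (Fin p) (Fin q) ℝ ≃ₗ[ℝ]
    (EuclideanSpace ℝ (Fin q) →L[ℝ] EuclideanSpace ℝ (Fin p)) :=
  Matrix.toEuclideanLin.trans LinearMap.toContinuousLinearMap

lemma mv_eq_mvL (P : Matrix (Fin p) (Fin q) ℝ) (v : EuclideanSpace ℝ (Fin q)) :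
    mv P v = mvL P v := rfl

lemma add_mv (P Q : Matrix (Fin p) (Fin q) ℝ) (v : EuclideanSpace ℝ (Fin q)) :
    mv (P + Q) v = mv P v + mv Q v := by
  simp only [mv_eq_mvL, map_add, add_apply]

lemma mv_add (P : Matrix (Fin p) (Fin q) ℝ) (v w : EuclideanSpace ℝ (Fin q)) :
    mv P (v + w) = mv P v + mv P w :=
  map_add _ v w

lemma mv_sub (P : Matrix (Fin p) (Fin q) ℝ) (v w : EuclideanSpace ℝ (Fin q)) :
    mv P (v - w) = mv P v - mv P w :=
  map_sub _ v w

lemma mul_mv {s : ℕ} (P : Matrix (Fin p) (Fin q) ℝ) (Q : Matrix (Fin q) (Fin s) ℝ)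
    (v : EuclideanSpace ℝ (Fin s)) : mv (P * Q) v = mv P (mv Q v) := by
  simp [mv]

lemma one_mv (v : EuclideanSpace ℝ (Fin p)) : mv 1 v = v := by
  simp [mv]

lemma norm_mv_le (P : Matrix (Fin p) (Fin q) ℝ) (v : EuclideanSpace ℝ (Fin q)) :
    ‖mv P v‖ ≤ ‖mvL P‖ * ‖v‖ :=
  (mvL P).le_opNorm v

lemma mexp_zero (A : Matrix (Fin p) (Fin p) ℝ) : mexp A 0 = 1 := by
  simp [mexp]

lemma mexp_add (A : Matrix (Fin p) (Fin p) ℝ) (s t : ℝ) :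
    mexp A (s + t) = mexp A s * mexp A t := by
  rw [mexp, add_smul]
  exact Matrix.exp_add_of_commute _ _ ((Commute.refl A).smul_left s |>.smul_right t)

lemma mv_mexp_mv_mexp (A : Matrix (Fin p) (Fin p) ℝ) (s t : ℝ) (v : EuclideanSpace ℝ (Fin p)) :
    mv (mexp A s) (mv (mexp A t) v) = mv (mexp A (s + t)) v := by
  rw [mexp_add, mul_mv]

lemma hasDerivAt_mvL_mexp (A : Matrix (Fin p) (Fin p) ℝ) (t : ℝ) :
    HasDerivAt (fun s => mvL (mexp A s)) (mvL (mexp A t * A)) t := by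
  -- any normed-algebra structure on matrices will do, since the statement does not see it
  let _ : NormedRing (Matrix (Fin p) (Fin p) ℝ) := Matrix.linftyOpNormedRing
  let _ : NormedAlgebra ℝ (Matrix (Fin p) (Fin p) ℝ) := Matrix.linftyOpNormedAlgebra
  exact (LinearMap.toContinuousLinearMap (mvL (p := p) (q := p)).toLinearMap).hasFDerivAt
    |>.comp_hasDerivAt t (hasDerivAt_exp_smul_const (𝕂 := ℝ) A t)

lemma continuous_mvL_mexp (A : Matrix (Fin p) (Fin p) ℝ) :
    Continuous fun s => mvL (mexp A s) :=
  continuous_iff_continuousAt.2 fun t => (hasDerivAt_mvL_mexp A t).continuousAt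

end Matrix

lemma exp_neg_mul_le_of_sub_le {σ M s t : ℝ} (hσ : 0 ≤ σ) (h : t - M ≤ s) :
    Real.exp (-σ * s) ≤ Real.exp (σ * M) * Real.exp (-σ * t) := by
  rw [← Real.exp_add]
  exact Real.exp_le_exp.2 (by nlinarith)

section SupNorm

variable {E : Type*} [NormedAddCommGroup E]

noncomputable def supNormOn (f : ℝ → E) (s : Set ℝ) : ℝ :=
  sSup ((fun t => ‖f t‖) '' s)

lemma supNormOn_nonneg (f : ℝ → E) (s : Set ℝ) : 0 ≤ supNormOn f s :=
  Real.sSup_nonneg (by rintro _ ⟨t, -, rfl⟩; exact norm_nonneg _)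

lemma norm_le_supNormOn {f : ℝ → E} {s : Set ℝ} (hs : IsCompact s) (hf : ContinuousOn f s)
    {t : ℝ} (ht : t ∈ s) : ‖f t‖ ≤ supNormOn f s :=
  le_csSup (hs.image_of_continuousOn hf.norm).bddAbove ⟨t, ht, rfl⟩

lemma supNormOn_le {f : ℝ → E} {s : Set ℝ} {C : ℝ} (hC : 0 ≤ C) (h : ∀ t ∈ s, ‖f t‖ ≤ C) :
    supNormOn f s ≤ C :=
  Real.sSup_le (by rintro _ ⟨t, ht, rfl⟩; exact h t ht) hC

variable {F : Type*} [NormedAddCommGroup F]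

noncomputable def initNorm (M : ℝ) (x : ℝ → E) (u : ℝ → F) : ℝ :=
  ‖x 0‖ + supNormOn u (Icc (-M) 0)

lemma initNorm_nonneg (M : ℝ) (x : ℝ → E) (u : ℝ → F) : 0 ≤ initNorm M x u :=
  add_nonneg (norm_nonneg _) (supNormOn_nonneg _ _)

lemma norm_le_initNorm (M : ℝ) (x : ℝ → E) (u : ℝ → F) : ‖x 0‖ ≤ initNorm M x u :=
  le_add_of_nonneg_right (supNormOn_nonneg _ _)

lemma supNormOn_le_initNorm (M : ℝ) (x : ℝ → E) (u : ℝ → F) :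
    supNormOn u (Icc (-M) 0) ≤ initNorm M x u :=
  le_add_of_nonneg_left (norm_nonneg _)

end SupNorm

lemma norm_le_of_shifted_decay {E : Type*} [NormedAddCommGroup E] {f : ℝ → E} {M σ Q X : ℝ}
    (hM : 0 ≤ M) (hσ : 0 ≤ σ) (hX : ∀ t ∈ Icc 0 M, ‖f t‖ ≤ X)
    (hdecay : ∀ t, 0 ≤ t → ‖f (t + M)‖ ≤ Q * Real.exp (-σ * t) * X) {t : ℝ} (ht : 0 ≤ t) :
    ‖f t‖ ≤ max 1 Q * Real.exp (σ * M) * X * Real.exp (-σ * t) := by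
  have hX0 : 0 ≤ X := (norm_nonneg _).trans (hX 0 ⟨le_rfl, hM⟩)
  rcases le_total t M with htM | htM
  · have h1 : 1 ≤ Real.exp (σ * M) * Real.exp (-σ * t) := by
      simpa using exp_neg_mul_le_of_sub_le hσ (s := 0) (by linarith)
    calc ‖f t‖ ≤ X := hX t ⟨ht, htM⟩
      _ ≤ max 1 Q * (Real.exp (σ * M) * Real.exp (-σ * t)) * X :=
        le_mul_of_one_le_left hX0 (one_le_mul_of_one_le_of_one_le (le_max_left _ _) h1)
      _ = _ := by ring
  · have h := hdecay (t - M) (by linarith)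
    rw [sub_add_cancel] at h
    calc ‖f t‖ ≤ Q * Real.exp (-σ * (t - M)) * X := h
      _ ≤ max 1 Q * Real.exp (-σ * (t - M)) * X := by gcongr; exact le_max_right _ _
      _ = _ := by rw [show -σ * (t - M) = σ * M + -σ * t by ring, Real.exp_add]; ring

lemma gronwallBound_zero_left_eq_mul (K ε x : ℝ) :
    gronwallBound 0 K ε x = ε * gronwallBound 0 K 1 x := by
  unfold gronwallBound
  split_ifs <;> ring

lemma integral_le_gronwallBound {h : ℝ → ℝ} {K ε a b : ℝ} (hab : a ≤ b)
    (hh : ContinuousOn h (Icc a b)) (bound : ∀ t ∈ Ico a b, h t ≤ K * (∫ s in a..t, h s) + ε) :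
    ∀ t ∈ Icc a b, ∫ s in a..t, h s ≤ gronwallBound 0 K ε (t - a) := by
  have hint : IntegrableOn h (uIcc a b) := by
    rw [uIcc_of_le hab]; exact hh.integrableOn_Icc
  have hcont : ContinuousOn (fun t => ∫ s in a..t, h s) (Icc a b) := by
    simpa [uIcc_of_le hab] using intervalIntegral.continuousOn_primitive_interval hint
  refine le_gronwallBound_of_liminf_deriv_right_le hcont (fun t ht r hr => ?_) (by simp) bound
  have hmem : Icc a b ∈ nhdsWithin t (Ioi t) := Icc_mem_nhdsGT_of_mem ht
  have hderiv := intervalIntegral.integral_hasDerivWithinAt_right (s := Ici t)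
    ((hh.mono (Icc_subset_Icc_right ht.2.le)).intervalIntegrable_of_Icc ht.1)
    ⟨Icc a b, hmem, hh.aestronglyMeasurable measurableSet_Icc⟩
    ((hh t (Ico_subset_Icc_self ht)).mono_of_mem_nhdsWithin hmem)
  simpa only [slope_def_field, div_eq_inv_mul] using hderiv.liminf_right_slope_le hr

section DelayedSystem

variable {n m : ℕ} {A : Matrix (Fin n) (Fin n) ℝ} {B : Matrix (Fin n) (Fin m) ℝ} {τ : ℝ}
  {x : ℝ → EuclideanSpace ℝ (Fin n)} {u : ℝ → EuclideanSpace ℝ (Fin m)}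

structure IsDelayedSolution (A : Matrix (Fin n) (Fin n) ℝ) (B : Matrix (Fin n) (Fin m) ℝ)
    (τ : ℝ) (x : ℝ → EuclideanSpace ℝ (Fin n)) (u : ℝ → EuclideanSpace ℝ (Fin m)) : Prop where
  continuousOn_state : ContinuousOn x (Ici 0)
  continuousOn_input : ContinuousOn u (Ici (-τ))
  integral_eq : ∀ t, 0 ≤ t → x t = x 0 + ∫ s in (0 : ℝ)..t, (mv A (x s) + mv B (u (s - τ)))

namespace IsDelayedSolution

lemma continuousOn_delayed_input (hs : IsDelayedSolution A B τ x u) :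
    ContinuousOn (fun s => u (s - τ)) (Ici 0) :=
  hs.continuousOn_input.comp (by fun_prop) fun s (hs : 0 ≤ s) => show -τ ≤ s - τ by linarith

lemma continuousOn_rhs (hs : IsDelayedSolution A B τ x u) :
    ContinuousOn (fun s => mv A (x s) + mv B (u (s - τ))) (Ici 0) := by
  simp only [mv_eq_mvL]
  exact ((mvL A).continuous.comp_continuousOn hs.continuousOn_state).add
    ((mvL B).continuous.comp_continuousOn hs.continuousOn_delayed_input)

lemma hasDerivAt (hs : IsDelayedSolution A B τ x u) {t : ℝ} (ht : 0 < t) :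
    HasDerivAt x (mv A (x t) + mv B (u (t - τ))) t := by
  have hc := hs.continuousOn_rhs
  have hint : IntervalIntegrable (fun s => mv A (x s) + mv B (u (s - τ))) volume 0 t :=
    (hc.mono Icc_subset_Ici_self).intervalIntegrable_of_Icc ht.le
  have hx : (fun t => x 0 + ∫ s in (0 : ℝ)..t, (mv A (x s) + mv B (u (s - τ)))) =ᶠ[nhds t] x := by
    filter_upwards [Ioi_mem_nhds ht] with s hs' using (hs.integral_eq s (le_of_lt hs')).symm
  refine (HasDerivAt.const_add (x 0) ?_).congr_of_eventuallyEq hx.symm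
  exact intervalIntegral.integral_hasDerivAt_right hint
    ((hc.mono Ioi_subset_Ici_self).stronglyMeasurableAtFilter isOpen_Ioi t ht)
    (hc.continuousAt (Ici_mem_nhds ht))

lemma integral_eq_sub_mexp (hs : IsDelayedSolution A B τ x u) {a b : ℝ} (ha : 0 ≤ a)
    (hab : a ≤ b) :
    ∫ θ in a..b, mv (mexp A (b - θ)) (mv B (u (θ - τ))) = x b - mv (mexp A (b - a)) (x a) := by
  set g : ℝ → EuclideanSpace ℝ (Fin n) := fun s => mv (mexp A (-s)) (mv B (u (s - τ)))
  have hexp : Continuous fun s => mvL (mexp A (-s)) := (continuous_mvL_mexp A).comp continuous_neg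
  have hy : ∀ s ∈ Ioo a b, HasDerivAt (fun s => mv (mexp A (-s)) (x s)) (g s) s := by
    intro s hs'
    have h : HasDerivAt (fun s => mv (mexp A (-s)) (x s))
        (-mv (mexp A (-s) * A) (x s) + mv (mexp A (-s)) (mv A (x s) + mv B (u (s - τ)))) s := by
      simpa [mv_eq_mvL] using ((hasDerivAt_mvL_mexp A (-s)).scomp s (hasDerivAt_neg s)).clm_apply
        (hs.hasDerivAt (ha.trans_lt hs'.1))
    refine h.congr_deriv ?_
    rw [mul_mv, mv_add]
    abel
  have hg : IntervalIntegrable g volume a b := by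
    refine ContinuousOn.intervalIntegrable_of_Icc hab ?_
    simp only [g, mv_eq_mvL]
    exact hexp.continuousOn.clm_apply ((mvL B).continuous.comp_continuousOn
      (hs.continuousOn_delayed_input.mono fun s hs' => ha.trans hs'.1))
  have hftc : ∫ θ in a..b, g θ = mv (mexp A (-b)) (x b) - mv (mexp A (-a)) (x a) := by
    refine intervalIntegral.integral_eq_sub_of_hasDerivAt_of_le hab ?_ hy hg
    simp only [mv_eq_mvL]
    exact hexp.continuousOn.clm_apply (hs.continuousOn_state.mono fun s hs' => ha.trans hs'.1)
  have hcomm : mv (mexp A b) (∫ θ in a..b, g θ) =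
      ∫ θ in a..b, mv (mexp A (b - θ)) (mv B (u (θ - τ))) := by
    rw [mv_eq_mvL, ← ContinuousLinearMap.intervalIntegral_comp_comm _ hg]
    refine intervalIntegral.integral_congr fun θ _ => ?_
    simp only [g, ← mv_eq_mvL, mv_mexp_mv_mexp, sub_eq_add_neg]
  rw [← hcomm, hftc, mv_sub, mv_mexp_mv_mexp, mv_mexp_mv_mexp, add_neg_cancel, mexp_zero,
    one_mv, ← sub_eq_add_neg]

lemma continuousOn_majorant (hs : IsDelayedSolution A B τ x u) :
    ContinuousOn (fun s => ‖mvL A‖ * ‖x s‖ + ‖mvL B‖ * ‖u (s - τ)‖) (Ici 0) :=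
  (continuousOn_const.mul hs.continuousOn_state.norm).add
    (continuousOn_const.mul hs.continuousOn_delayed_input.norm)

lemma norm_le_add_integral (hs : IsDelayedSolution A B τ x u) {p t : ℝ} (hp : 0 ≤ p)
    (hpt : p ≤ t) :
    ‖x p‖ ≤ ‖x 0‖ + ∫ s in (0 : ℝ)..t, (‖mvL A‖ * ‖x s‖ + ‖mvL B‖ * ‖u (s - τ)‖) := by
  have hc := hs.continuousOn_rhs.mono (Icc_subset_Ici_self : Icc 0 p ⊆ Ici 0)
  have hm := hs.continuousOn_majorant.mono (Icc_subset_Ici_self : Icc 0 t ⊆ Ici 0)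
  rw [hs.integral_eq p hp]
  refine (norm_add_le _ _).trans (add_le_add_right ?_ _)
  refine (intervalIntegral.norm_integral_le_integral_norm hp).trans <|
    (intervalIntegral.integral_mono_on hp (hc.norm.intervalIntegrable_of_Icc hp)
      ((hm.mono (Icc_subset_Icc_right hpt)).intervalIntegrable_of_Icc hp) fun s _ => ?_).trans ?_
  · exact (norm_add_le _ _).trans (add_le_add (norm_mv_le _ _) (norm_mv_le _ _))
  · exact intervalIntegral.integral_mono_interval le_rfl hp hpt
      (Filter.Eventually.of_forall fun _ => by positivity)
      (hm.intervalIntegrable_of_Icc (hp.trans hpt))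

end IsDelayedSolution

end DelayedSystem

lemma predictor_integral_eq {n m : ℕ} (A : Matrix (Fin n) (Fin n) ℝ)
    (B : Matrix (Fin n) (Fin m) ℝ) (u : ℝ → EuclideanSpace ℝ (Fin m)) (τ r t : ℝ) :
    ∫ s in t..(t + r), mv (mexp A (t + r - s)) (mv B (u (s - r))) =
      ∫ θ in (t + τ - r)..(t + τ), mv (mexp A (t + τ - θ)) (mv B (u (θ - τ))) := by
  have h := intervalIntegral.integral_comp_add_right
    (fun s => mv (mexp A (t + r - s)) (mv B (u (s - r)))) (r - τ) (a := t + τ - r) (b := t + τ)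
  rw [show t + τ - r + (r - τ) = t by ring, show t + τ + (r - τ) = t + r by ring] at h
  rw [← h]
  refine intervalIntegral.integral_congr fun θ _ => ?_
  rw [show t + r - (θ + (r - τ)) = t + τ - θ by ring, show θ + (r - τ) - r = θ - τ by ring]

section ClosedLoop

variable {n m : ℕ} {A : Matrix (Fin n) (Fin n) ℝ} {B : Matrix (Fin n) (Fin m) ℝ}
  {k : Matrix (Fin m) (Fin n) ℝ} {τ r : ℝ}
  {x : ℝ → EuclideanSpace ℝ (Fin n)} {u : ℝ → EuclideanSpace ℝ (Fin m)}

lemma norm_integral_mexp_le {b c a Ce U : ℝ} (hca : c ≤ a) (hCe0 : 0 ≤ Ce)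
    (hbound : ∀ θ ∈ Ioc c a, ‖mvL (mexp A (b - θ))‖ ≤ Ce ∧ ‖u (θ - τ)‖ ≤ U) :
    ‖∫ θ in c..a, mv (mexp A (b - θ)) (mv B (u (θ - τ)))‖ ≤ (a - c) * (Ce * (‖mvL B‖ * U)) := by
  have h := intervalIntegral.norm_integral_le_of_norm_le_const (C := Ce * (‖mvL B‖ * U))
    (f := fun θ => mv (mexp A (b - θ)) (mv B (u (θ - τ)))) (a := c) (b := a) fun θ hθ => by
      rw [uIoc_of_le hca] at hθ
      obtain ⟨hA, hu⟩ := hbound θ hθ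
      exact (norm_mv_le _ _).trans (mul_le_mul hA ((norm_mv_le _ _).trans
        (mul_le_mul_of_nonneg_left hu (norm_nonneg _))) (norm_nonneg _) hCe0)
  rwa [abs_of_nonneg (sub_nonneg.2 hca), mul_comm] at h

structure IsClosedLoopSolution (A : Matrix (Fin n) (Fin n) ℝ) (B : Matrix (Fin n) (Fin m) ℝ)
    (k : Matrix (Fin m) (Fin n) ℝ) (τ r : ℝ) (x : ℝ → EuclideanSpace ℝ (Fin n))
    (u : ℝ → EuclideanSpace ℝ (Fin m)) : Prop extends IsDelayedSolution A B τ x u where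
  continuousOn_history : ContinuousOn u (Ici (-max r τ))
  predictor_eq : ∀ t, 0 ≤ t → u t = mv k (mv (mexp A r) (x t)) +
    mv k (∫ s in t..(t + r), mv (mexp A (t + r - s)) (mv B (u (s - r))))

namespace IsClosedLoopSolution

lemma predictor_eq_of_le (hs : IsClosedLoopSolution A B k τ r x u) (hr : 0 ≤ r) {t : ℝ}
    (ht : 0 ≤ t) (hrt : r ≤ t + τ) :
    u t = mv k (mv (mexp A r) (x t)) + mv k (x (t + τ) - mv (mexp A r) (x (t + τ - r))) := by
  rw [hs.predictor_eq t ht, predictor_integral_eq A B u τ r t,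
    hs.integral_eq_sub_mexp (by linarith) (by linarith), sub_sub_cancel]

lemma comparison_eq (hs : IsClosedLoopSolution A B k τ r x u) (hr : 0 ≤ r) {t : ℝ}
    (ht : 0 ≤ t) :
    x (t + max r τ) = x (0 + max r τ) + ∫ s in (0 : ℝ)..t,
      (mv (A + B * k) (x (s + max r τ)) +
        mv (B * k * mexp A r) (x (s - τ + max r τ) - x (s - r + max r τ))) := by
  set M := max r τ
  have hM : 0 ≤ M := hr.trans (le_max_left r τ)
  have hint : ∀ a b, 0 ≤ a → a ≤ b →
      IntervalIntegrable (fun s => mv A (x s) + mv B (u (s - τ))) volume a b :=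
    fun a b ha hab =>
      (hs.continuousOn_rhs.mono fun s hs' => ha.trans hs'.1).intervalIntegrable_of_Icc hab
  have hcov := intervalIntegral.integral_comp_add_right
    (fun s => mv A (x s) + mv B (u (s - τ))) M (a := 0) (b := t)
  simp only [zero_add] at hcov
  have hshift : x (t + M) = x M + ∫ s in (0 : ℝ)..t, (mv A (x (s + M)) + mv B (u (s + M - τ))) := by
    rw [hcov, hs.integral_eq _ (by positivity), hs.integral_eq M hM, add_assoc,
      intervalIntegral.integral_add_adjacent_intervals (hint _ _ le_rfl hM)
      (hint _ _ hM (by linarith))]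
  rw [zero_add, hshift]
  congr 1
  refine intervalIntegral.integral_congr fun s hs' => ?_
  rw [uIcc_of_le ht] at hs'
  have hu := hs.predictor_eq_of_le hr (t := s + M - τ) (by linarith [hs'.1, le_max_right r τ])
    (by linarith [hs'.1, le_max_left r τ])
  rw [hu, show s + M - τ + τ = s + M by ring, show s + M - r = s - r + M by ring,
    show s + M - τ = s - τ + M by ring]
  simp only [add_mv, mul_mv, mv_add, mv_sub]
  abel

lemma norm_predictor_integral_le (hs : IsClosedLoopSolution A B k τ r x u) (hτ : 0 ≤ τ)
    (hr : 0 ≤ r) {t Ce X U : ℝ} (ht : 0 ≤ t) (hCe : ∀ p ∈ Icc 0 r, ‖mvL (mexp A p)‖ ≤ Ce)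
    (hX : ∀ p, 0 ≤ p → t - r ≤ p → p ≤ t + τ → ‖x p‖ ≤ X)
    (hU : ∀ p ∈ Ioc (t - r) (-τ), ‖u p‖ ≤ U) (hU0 : 0 ≤ U) :
    ‖∫ s in t..(t + r), mv (mexp A (t + r - s)) (mv B (u (s - r)))‖ ≤
      (1 + Ce) * X + r * Ce * ‖mvL B‖ * U := by
  -- split the integral at `a`: the part before time `0` only sees the history of `u`
  set a := max (t + τ - r) 0
  set g : ℝ → EuclideanSpace ℝ (Fin n) := fun θ => mv (mexp A (t + τ - θ)) (mv B (u (θ - τ)))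
  have hCe0 : 0 ≤ Ce := (norm_nonneg _).trans (hCe 0 ⟨le_rfl, hr⟩)
  have hta : t + τ - r ≤ a := le_max_left _ _
  have hat : a ≤ t + τ := max_le (by linarith) (by linarith)
  have hg : ContinuousOn g (Icc (t + τ - r) (t + τ)) := by
    simp only [g, mv_eq_mvL]
    refine ((continuous_mvL_mexp A).comp (continuous_sub_left _)).continuousOn.clm_apply
      ((mvL B).continuous.comp_continuousOn (hs.continuousOn_history.comp
        (continuous_sub_right τ).continuousOn fun θ hθ => ?_))
    have := hθ.1
    show -max r τ ≤ θ - τ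
    linarith [le_max_left r τ]
  have hhist := norm_integral_mexp_le (B := B) (u := u) (τ := τ) (b := t + τ) hta hCe0 fun θ hθ =>
    have hθ0 : θ ≤ 0 := (le_max_iff.1 hθ.2).resolve_left (not_le.2 hθ.1)
    ⟨hCe _ ⟨by linarith, by linarith [hθ.1]⟩, hU _ ⟨by linarith [hθ.1], by linarith⟩⟩
  have hlen := mul_le_mul_of_nonneg_right (show a - (t + τ - r) ≤ r from
    sub_le_iff_le_add.2 (max_le (by linarith) (by linarith))) (by positivity :
      0 ≤ Ce * (‖mvL B‖ * U))
  have hxa : ‖mv (mexp A (t + τ - a)) (x a)‖ ≤ Ce * X :=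
    (norm_mv_le _ _).trans (mul_le_mul (hCe _ ⟨by linarith, by linarith⟩)
      (hX a (le_max_right _ _) (by linarith) hat) (norm_nonneg _) hCe0)
  have hxτ : ‖x (t + τ)‖ ≤ X := hX _ (by linarith) (by linarith) le_rfl
  rw [predictor_integral_eq A B u τ r t,
    ← intervalIntegral.integral_add_adjacent_intervals
      ((hg.mono (Icc_subset_Icc_right hat)).intervalIntegrable_of_Icc hta)
      ((hg.mono (Icc_subset_Icc_left hta)).intervalIntegrable_of_Icc hat),
    hs.integral_eq_sub_mexp (le_max_right _ _) hat]
  calc _ ≤ ‖∫ θ in (t + τ - r)..a, g θ‖ + (‖x (t + τ)‖ + ‖mv (mexp A (t + τ - a)) (x a)‖) :=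
        (norm_add_le _ _).trans (add_le_add le_rfl (norm_sub_le _ _))
    _ ≤ _ := by linarith

lemma norm_input_le (hs : IsClosedLoopSolution A B k τ r x u) (hτ : 0 ≤ τ)
    (hr : 0 ≤ r) {t Ce X U : ℝ} (ht : 0 ≤ t) (hCe : ∀ p ∈ Icc 0 r, ‖mvL (mexp A p)‖ ≤ Ce)
    (hX : ∀ p, 0 ≤ p → t - r ≤ p → p ≤ t + τ → ‖x p‖ ≤ X)
    (hU : ∀ p ∈ Ioc (t - r) (-τ), ‖u p‖ ≤ U) (hU0 : 0 ≤ U) :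
    ‖u t‖ ≤ ‖mvL k‖ * ((1 + 2 * Ce) * X + r * Ce * ‖mvL B‖ * U) := by
  have hCe0 : 0 ≤ Ce := (norm_nonneg _).trans (hCe 0 ⟨le_rfl, hr⟩)
  have hxt : ‖mv (mexp A r) (x t)‖ ≤ Ce * X :=
    (norm_mv_le _ _).trans (mul_le_mul (hCe r ⟨hr, le_rfl⟩)
      (hX t ht (by linarith) (by linarith)) (norm_nonneg _) hCe0)
  have hI := hs.norm_predictor_integral_le hτ hr ht hCe hX hU hU0
  rw [hs.predictor_eq t ht, ← mv_add]
  refine (norm_mv_le _ _).trans (mul_le_mul_of_nonneg_left ?_ (norm_nonneg _))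
  exact (norm_add_le _ _).trans (by linarith)

lemma norm_delayed_input_le (hs : IsClosedLoopSolution A B k τ r x u) (hτ : 0 ≤ τ)
    (hr : 0 ≤ r) {t Ce X Du : ℝ} (ht : 0 ≤ t) (hCe : ∀ p ∈ Icc 0 r, ‖mvL (mexp A p)‖ ≤ Ce)
    (hX : ∀ p ∈ Icc 0 t, ‖x p‖ ≤ X) (hX0 : 0 ≤ X) (hDu : ∀ p ∈ Icc (-max r τ) 0, ‖u p‖ ≤ Du) :
    ‖u (t - τ)‖ ≤ ‖mvL k‖ * (1 + 2 * Ce) * X + (‖mvL k‖ * r * Ce * ‖mvL B‖ + 1) * Du := by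
  have hCe0 : 0 ≤ Ce := (norm_nonneg _).trans (hCe 0 ⟨le_rfl, hr⟩)
  have hDu0 : 0 ≤ Du := (norm_nonneg _).trans (hDu 0 ⟨by linarith [le_max_left r τ], le_rfl⟩)
  rcases lt_or_ge t τ with htτ | hτt
  · have h := hDu (t - τ) ⟨by linarith [le_max_right r τ], by linarith⟩
    have h1 : 0 ≤ ‖mvL k‖ * (1 + 2 * Ce) * X := by positivity
    have h2 : 0 ≤ ‖mvL k‖ * r * Ce * ‖mvL B‖ * Du := by positivity
    nlinarith
  · have h := hs.norm_input_le hτ hr (t := t - τ) (by linarith) hCe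
      (fun p hp _ hpt => hX p ⟨hp, by linarith⟩)
      (fun p hp => hDu p ⟨by linarith [hp.1, le_max_left r τ], by linarith [hp.2]⟩) hDu0
    nlinarith

end IsClosedLoopSolution

theorem exists_norm_state_le_of_mem_Icc (A : Matrix (Fin n) (Fin n) ℝ)
    (B : Matrix (Fin n) (Fin m) ℝ) (k : Matrix (Fin m) (Fin n) ℝ) (hτ : 0 ≤ τ) (hr : 0 ≤ r)
    {T : ℝ} (hT : 0 ≤ T) :
    ∃ C, 0 < C ∧ ∀ x u, IsClosedLoopSolution A B k τ r x u →
      ∀ t ∈ Icc 0 T, ‖x t‖ ≤ C * initNorm (max r τ) x u := by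
  set Ce := supNormOn (fun p => mvL (mexp A p)) (Icc 0 r)
  have hCe : ∀ p ∈ Icc 0 r, ‖mvL (mexp A p)‖ ≤ Ce := fun p hp =>
    norm_le_supNormOn isCompact_Icc (continuous_mvL_mexp A).continuousOn hp
  have hCe0 : 0 ≤ Ce := supNormOn_nonneg _ _
  set K := ‖mvL A‖ + ‖mvL B‖ * (‖mvL k‖ * (1 + 2 * Ce))
  set L := ‖mvL B‖ * (‖mvL k‖ * r * Ce * ‖mvL B‖ + 1)
  have hK : 0 ≤ K := by positivity
  have hL : 0 ≤ L := by positivity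
  have hG : 0 ≤ gronwallBound 0 K 1 T := by
    simpa [gronwallBound_x0] using gronwallBound_mono le_rfl zero_le_one hK hT
  refine ⟨1 + (K + L) * gronwallBound 0 K 1 T, by positivity, fun x u hs t ht => ?_⟩
  set h : ℝ → ℝ := fun s => ‖mvL A‖ * ‖x s‖ + ‖mvL B‖ * ‖u (s - τ)‖
  have hh : ContinuousOn h (Icc 0 T) := hs.continuousOn_majorant.mono Icc_subset_Ici_self
  have hDu : ∀ p ∈ Icc (-max r τ) 0, ‖u p‖ ≤ supNormOn u (Icc (-max r τ) 0) := fun p hp =>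
    norm_le_supNormOn isCompact_Icc (hs.continuousOn_history.mono Icc_subset_Ici_self) hp
  have hbound : ∀ s ∈ Ico 0 T, h s ≤ K * (∫ p in (0 : ℝ)..s, h p) +
      (K + L) * initNorm (max r τ) x u := by
    intro s hs'
    have hψ : 0 ≤ ∫ p in (0 : ℝ)..s, h p :=
      intervalIntegral.integral_nonneg hs'.1 fun p _ => by positivity
    have hX : ∀ p ∈ Icc 0 s, ‖x p‖ ≤ ‖x 0‖ + ∫ p in (0 : ℝ)..s, h p := fun p hp =>
      hs.norm_le_add_integral hp.1 hp.2
    have hu := hs.norm_delayed_input_le hτ hr hs'.1 hCe hX (by positivity) hDu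
    have hx := hX s ⟨hs'.1, le_rfl⟩
    have hxK := mul_le_mul_of_nonneg_left (norm_le_initNorm (max r τ) x u) hK
    have huL := mul_le_mul_of_nonneg_left (supNormOn_le_initNorm (max r τ) x u) hL
    have hAx := mul_le_mul_of_nonneg_left hx (norm_nonneg (mvL A))
    have hBu := mul_le_mul_of_nonneg_left hu (norm_nonneg (mvL B))
    linarith
  have hg := integral_le_gronwallBound hT hh hbound t ht
  rw [sub_zero, gronwallBound_zero_left_eq_mul] at hg
  have hD := initNorm_nonneg (max r τ) x u
  calc ‖x t‖ ≤ ‖x 0‖ + ∫ p in (0 : ℝ)..t, h p := hs.norm_le_add_integral ht.1 le_rfl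
    _ ≤ initNorm (max r τ) x u + (K + L) * initNorm (max r τ) x u * gronwallBound 0 K 1 T := by
      refine add_le_add (norm_le_initNorm _ x u) (hg.trans ?_)
      gcongr
      exact gronwallBound_mono le_rfl zero_le_one hK ht.2
    _ = _ := by ring

def ComparisonSystemExpStable (A : Matrix (Fin n) (Fin n) ℝ) (B : Matrix (Fin n) (Fin m) ℝ)
    (k : Matrix (Fin m) (Fin n) ℝ) (τ r Q₀ σ₀ : ℝ) : Prop :=
  ∀ z : ℝ → EuclideanSpace ℝ (Fin n), ContinuousOn z (Ici (-max r τ)) →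
    (∀ t : ℝ, 0 ≤ t → z t = z 0 + ∫ s in (0 : ℝ)..t,
      (mv (A + B * k) (z s) + mv (B * k * mexp A r) (z (s - τ) - z (s - r)))) →
    ∀ t : ℝ, 0 ≤ t → ‖z t‖ ≤ Q₀ * Real.exp (-σ₀ * t) * supNormOn z (Icc (-max r τ) 0)

theorem exists_norm_state_le_exp (hτ : 0 ≤ τ) (hr : 0 ≤ r) {Q₀ σ₀ : ℝ} (hQ₀ : 0 ≤ Q₀)
    (hσ₀ : 0 ≤ σ₀) (hcmp : ComparisonSystemExpStable A B k τ r Q₀ σ₀) :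
    ∃ C, 0 < C ∧ ∀ x u, IsClosedLoopSolution A B k τ r x u →
      ∀ t, 0 ≤ t → ‖x t‖ ≤ C * Real.exp (-σ₀ * t) * initNorm (max r τ) x u := by
  set M := max r τ
  have hM : 0 ≤ M := hr.trans (le_max_left r τ)
  obtain ⟨C₀, hC₀, hbound⟩ := exists_norm_state_le_of_mem_Icc A B k hτ hr hM
  refine ⟨max 1 Q₀ * Real.exp (σ₀ * M) * C₀, by positivity, fun x u hs t ht => ?_⟩
  have hD := initNorm_nonneg M x u
  have hz := hcmp (fun s => x (s + M))
    (hs.continuousOn_state.comp (continuous_add_const M).continuousOn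
      fun s (hs' : -M ≤ s) => show 0 ≤ s + M by linarith)
    fun t ht => hs.comparison_eq hr ht
  have hhist : supNormOn (fun s => x (s + M)) (Icc (-M) 0) ≤ C₀ * initNorm M x u :=
    supNormOn_le (by positivity) fun s hs' =>
      hbound x u hs _ ⟨by linarith [hs'.1], by linarith [hs'.2]⟩
  calc ‖x t‖ ≤ max 1 Q₀ * Real.exp (σ₀ * M) * (C₀ * initNorm M x u) * Real.exp (-σ₀ * t) :=
        norm_le_of_shifted_decay hM hσ₀ (hbound x u hs)
          (fun t ht => (hz t ht).trans (by gcongr)) ht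
    _ = _ := by ring

theorem exists_norm_input_le_exp (A : Matrix (Fin n) (Fin n) ℝ) (B : Matrix (Fin n) (Fin m) ℝ)
    (k : Matrix (Fin m) (Fin n) ℝ) (hτ : 0 ≤ τ) (hr : 0 ≤ r) {σ C₁ : ℝ} (hσ : 0 ≤ σ)
    (hC₁ : 0 ≤ C₁) :
    ∃ C, 0 < C ∧ ∀ x u, IsClosedLoopSolution A B k τ r x u →
      (∀ t, 0 ≤ t → ‖x t‖ ≤ C₁ * Real.exp (-σ * t) * initNorm (max r τ) x u) →
      ∀ s, -max r τ ≤ s → ‖u s‖ ≤ C * Real.exp (-σ * s) * initNorm (max r τ) x u := by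
  set M := max r τ
  set Ce := supNormOn (fun p => mvL (mexp A p)) (Icc 0 r)
  have hCe : ∀ p ∈ Icc 0 r, ‖mvL (mexp A p)‖ ≤ Ce := fun p hp =>
    norm_le_supNormOn isCompact_Icc (continuous_mvL_mexp A).continuousOn hp
  have hCe0 : 0 ≤ Ce := supNormOn_nonneg _ _
  set C' := ‖mvL k‖ * ((1 + 2 * Ce) * C₁ + r * Ce * ‖mvL B‖) * Real.exp (σ * M)
  have hC' : 0 ≤ C' := by positivity
  refine ⟨1 + C', by positivity, fun x u hs hx s hs' => ?_⟩
  set D := initNorm M x u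
  have hD : 0 ≤ D := initNorm_nonneg M x u
  have hDu : ∀ p ∈ Icc (-M) 0, ‖u p‖ ≤ D := fun p hp =>
    (norm_le_supNormOn isCompact_Icc (hs.continuousOn_history.mono Icc_subset_Ici_self) hp).trans
      (supNormOn_le_initNorm M x u)
  rcases le_total s 0 with hs0 | hs0
  · have h1 : 1 ≤ Real.exp (-σ * s) := Real.one_le_exp (by nlinarith)
    calc ‖u s‖ ≤ D := hDu s ⟨hs', hs0⟩
      _ ≤ (1 + C') * Real.exp (-σ * s) * D :=
        le_mul_of_one_le_left hD (one_le_mul_of_one_le_of_one_le (by linarith) h1)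
  · set E := Real.exp (σ * M) * Real.exp (-σ * s)
    have hE : ∀ p, s - M ≤ p → Real.exp (-σ * p) ≤ E := fun p hp => exp_neg_mul_le_of_sub_le hσ hp
    have hX : ∀ p, 0 ≤ p → s - r ≤ p → p ≤ s + τ → ‖x p‖ ≤ C₁ * E * D := fun p hp hsp _ =>
      (hx p hp).trans (by gcongr; exact hE p (by linarith [le_max_left r τ]))
    have hU : ∀ p ∈ Ioc (s - r) (-τ), ‖u p‖ ≤ E * D := fun p hp =>
      (hDu p ⟨by linarith [hp.1, le_max_left r τ], by linarith [hp.2]⟩).trans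
        (le_mul_of_one_le_left hD (by simpa using hE 0 (by linarith [hp.1, hp.2, le_max_left r τ])))
    calc ‖u s‖ ≤ ‖mvL k‖ * ((1 + 2 * Ce) * (C₁ * E * D) + r * Ce * ‖mvL B‖ * (E * D)) :=
          hs.norm_input_le hτ hr hs0 hCe hX hU (by positivity)
      _ = C' * Real.exp (-σ * s) * D := by ring
      _ ≤ (1 + C') * Real.exp (-σ * s) * D := by gcongr; linarith

end ClosedLoop

theorem stmt_10 (n m : ℕ) (A : Matrix (Fin n) (Fin n) ℝ)
    (B : Matrix (Fin n) (Fin m) ℝ) (k : Matrix (Fin m) (Fin n) ℝ)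
    (τ r : ℝ) (hτ : 0 ≤ τ) (hr : 0 ≤ r)
    -- hypothesis: exponential decay for the comparison delay system
    (Q₀ σ₀ : ℝ) (hQ₀ : 0 < Q₀) (hσ₀ : 0 < σ₀)
    (hcmp : ∀ z : ℝ → EuclideanSpace ℝ (Fin n),
      ContinuousOn z (Set.Ici (-max r τ)) →
      (∀ t : ℝ, 0 ≤ t →
        z t = z 0 + ∫ s in (0 : ℝ)..t,
          (mv (A + B * k) (z s) +
            mv (B * k * mexp A r) (z (s - τ) - z (s - r)))) →
      ∀ t : ℝ, 0 ≤ t →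
        ‖z t‖ ≤ Q₀ * Real.exp (-σ₀ * t) *
          sSup ((fun s => ‖z s‖) '' Set.Icc (-max r τ) 0)) :
    ∃ Q σ : ℝ, 0 < Q ∧ 0 < σ ∧
      ∀ (x : ℝ → EuclideanSpace ℝ (Fin n)) (u : ℝ → EuclideanSpace ℝ (Fin m)),
        ContinuousOn x (Set.Ici 0) →
        ContinuousOn u (Set.Ici (-max r τ)) →
        (∀ t : ℝ, 0 ≤ t →
          x t = x 0 + ∫ s in (0 : ℝ)..t, (mv A (x s) + mv B (u (s - τ)))) →
        (∀ t : ℝ, 0 ≤ t →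
          u t = mv k (mv (mexp A r) (x t)) +
            mv k (∫ s in t..(t + r), mv (mexp A (t + r - s)) (mv B (u (s - r))))) →
        u 0 = mv k (mv (mexp A r) (x 0)) +
          mv k (∫ s in (-r : ℝ)..0, mv (mexp A (-s)) (mv B (u s))) →
        ∀ t : ℝ, 0 ≤ t →
          ‖x t‖ + sSup ((fun s => ‖u s‖) '' Set.Icc (t - max r τ) t) ≤
            Q * Real.exp (-σ * t) *
              (‖x 0‖ + sSup ((fun s => ‖u s‖) '' Set.Icc (-max r τ) 0)) := by
  obtain ⟨C₁, hC₁, hx⟩ := exists_norm_state_le_exp hτ hr hQ₀.le hσ₀.le hcmp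
  obtain ⟨C₂, hC₂, hu⟩ := exists_norm_input_le_exp A B k hτ hr hσ₀.le hC₁.le
  refine ⟨C₁ + C₂ * Real.exp (σ₀ * max r τ), σ₀, by positivity, hσ₀,
    fun x u hxc huc hxeq hueq _ t ht => ?_⟩
  have hs : IsClosedLoopSolution A B k τ r x u :=
    ⟨⟨hxc, huc.mono (Ici_subset_Ici.2 (neg_le_neg (le_max_right r τ))), hxeq⟩, huc, hueq⟩
  have hD := initNorm_nonneg (max r τ) x u
  have hsup : supNormOn u (Icc (t - max r τ) t) ≤
      C₂ * (Real.exp (σ₀ * max r τ) * Real.exp (-σ₀ * t)) * initNorm (max r τ) x u :=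
    supNormOn_le (by positivity) fun s hs' =>
      (hu x u hs (hx x u hs) s (by linarith [hs'.1])).trans <| by
        gcongr
        exact exp_neg_mul_le_of_sub_le hσ₀.le hs'.1
  calc ‖x t‖ + supNormOn u (Icc (t - max r τ) t)
      ≤ C₁ * Real.exp (-σ₀ * t) * initNorm (max r τ) x u +
        C₂ * (Real.exp (σ₀ * max r τ) * Real.exp (-σ₀ * t)) * initNorm (max r τ) x u :=
      add_le_add (hx x u hs t ht) hsup
    _ = (C₁ + C₂ * Real.exp (σ₀ * max r τ)) * Real.exp (-σ₀ * t) * initNorm (max r τ) x u := by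
      ring
end

section
/- Let A, C ∈ ℝ^{n×n}, r ≥ ε ≥ 0, let d, q : [0,∞) → [−1,1] be measurable, let x be a solution of system (2.12), and define v(t) := x(t−r) − x(t−r−εd(t)) for t ≥ 0. Then for almost every t ≥ r with d(t) ≤ 0, the identity −v(t) = (exp(Aε|d(t)|) − I) x(t−r) − ∫_{t−r}^{t−r−εd(t)} exp(A(t−r−εd(t)−s)) q(s) C v(s) ds holds. -/
/-
For `d t ≤ 0` put `a = t - r ≤ b = t - r - ε d t`. On `[a, b]` the solution satisfies
`x' = A x + h` with forcing `h s = q s • C (x (s - r - ε d s) - x (s - r)) = -(q s • C (v s))`,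
so the identity is the variation-of-constants formula
`x b = exp ((b - a) A) x a + ∫ s in a..b, exp ((b - s) A) (h s)`.
As `x` is only absolutely continuous, that formula is obtained by integrating by parts against the
smooth kernel `s ↦ exp ((b - s) A)`, which reduces to Fubini's theorem on the triangle
`a < u < s < b`.
-/

open MeasureTheory

open Set NormedSpace

theorem ContinuousOn.exists_continuous_eqOn_Ici {α β : Type*} [LinearOrder α]
    [TopologicalSpace α] [OrderClosedTopology α] [TopologicalSpace β] {f : α → β} {c : α}
    (hf : ContinuousOn f (Ici c)) : ∃ g : α → β, Continuous g ∧ EqOn g f (Ici c) :=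
  ⟨fun u => f (max u c), hf.comp_continuous (continuous_id.max continuous_const)
    fun u => le_max_right u c, fun u hu => by simp only [max_eq_left (mem_Ici.1 hu)]⟩

theorem intervalIntegrable_comp_prodMk_of_continuous {P E : Type*} [TopologicalSpace P]
    [MeasurableSpace P] [OpensMeasurableSpace P] [SecondCountableTopology P]
    [NormedAddCommGroup E] {Φ : ℝ × P → E} (hΦ : Continuous Φ) {p : ℝ → P} (hp : Measurable p)
    {K : Set P} (hK : IsCompact K) {a b : ℝ} (hpK : ∀ s ∈ uIcc a b, p s ∈ K) :
    IntervalIntegrable (fun s => Φ (s, p s)) volume a b := by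
  obtain ⟨C, hC⟩ := (isCompact_uIcc.prod hK).exists_bound_of_continuousOn hΦ.continuousOn
  rw [intervalIntegrable_iff]
  refine IntegrableOn.of_bound measure_Ioc_lt_top
    (hΦ.stronglyMeasurable.comp_measurable (measurable_id.prodMk hp)).aestronglyMeasurable C ?_
  exact (ae_restrict_mem measurableSet_uIoc).mono fun s hs =>
    hC _ ⟨uIoc_subset_uIcc hs, hpK s (uIoc_subset_uIcc hs)⟩

section

variable {E F : Type*} [NormedAddCommGroup E] [NormedSpace ℝ E]
  [NormedAddCommGroup F] [NormedSpace ℝ F]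

theorem eq_add_integral_of_forall_eq_add_integral {y g : ℝ → E} {c : ℝ}
    (hy : ∀ t, c ≤ t → y t = y c + ∫ s in c..t, g s)
    (hg : ∀ t, c ≤ t → IntervalIntegrable g volume c t) {a t : ℝ} (ha : c ≤ a) (hat : a ≤ t) :
    y t = y a + ∫ s in a..t, g s := by
  rw [← intervalIntegral.integral_interval_sub_left (hg t (ha.trans hat)) (hg a ha),
    hy t (ha.trans hat), hy a ha]
  abel

theorem intervalIntegral_intervalIntegral_swap_triangle {f : ℝ → ℝ → E} {a b : ℝ}
    (hab : a ≤ b)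
    (hf : Integrable (Function.uncurry f)
      ((volume.restrict (Ioc a b)).prod (volume.restrict (Ioc a b)))) :
    ∫ u in a..b, ∫ s in u..b, f u s = ∫ s in a..b, ∫ u in a..s, f u s := by
  let Φ : ℝ → ℝ → E := fun u s =>
    {p : ℝ × ℝ | p.1 < p.2}.indicator (Function.uncurry f) (u, s)
  have inner_s : ∀ u ∈ Ioc a b, ∫ s in Ioc a b, Φ u s = ∫ s in u..b, f u s := by
    intro u hu
    rw [intervalIntegral.integral_of_le hu.2, show Ioc u b = Ioc a b ∩ Ioi u by grind,
      ← setIntegral_indicator measurableSet_Ioi]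
    rfl
  have inner_u : ∀ s ∈ Ioc a b, ∫ u in Ioc a b, Φ u s = ∫ u in a..s, f u s := by
    intro s hs
    rw [intervalIntegral.integral_of_le hs.1.le, integral_Ioc_eq_integral_Ioo (x := a) (y := s),
      show Ioo a s = Ioc a b ∩ Iio s by grind, ← setIntegral_indicator measurableSet_Iio]
    rfl
  rw [intervalIntegral.integral_of_le hab, intervalIntegral.integral_of_le hab,
    ← setIntegral_congr_fun measurableSet_Ioc inner_s,
    ← setIntegral_congr_fun measurableSet_Ioc inner_u]
  exact integral_integral_swap (hf.indicator (measurableSet_lt measurable_fst measurable_snd))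

theorem IntervalIntegrable.clm_apply_of_continuous {K : ℝ → E →L[ℝ] F} {f : ℝ → E}
    {a b : ℝ} (hK : Continuous K) (hf : IntervalIntegrable f volume a b) :
    IntervalIntegrable (fun u => K u (f u)) volume a b := by
  rw [intervalIntegrable_iff] at hf ⊢
  obtain ⟨C, hC⟩ := isCompact_uIcc.exists_bound_of_continuousOn hK.continuousOn (s := uIcc a b)
  exact (ContinuousLinearMap.id ℝ (E →L[ℝ] F)).integrable_of_bilin_of_bdd_left C
    hK.aestronglyMeasurable
    ((ae_restrict_mem measurableSet_uIoc).mono fun u hu => hC u (uIoc_subset_uIcc hu)) hf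

theorem integrable_prod_clm_apply {K : ℝ → E →L[ℝ] F} {f : ℝ → E} {a b : ℝ}
    (hK : Continuous K) (hf : IntegrableOn f (Ioc a b)) :
    Integrable (fun p : ℝ × ℝ => K p.2 (f p.1))
      ((volume.restrict (Ioc a b)).prod (volume.restrict (Ioc a b))) := by
  obtain ⟨C, hC⟩ := isCompact_Icc.exists_bound_of_continuousOn hK.continuousOn (s := Icc a b)
  refine (ContinuousLinearMap.id ℝ (E →L[ℝ] F)).integrable_of_bilin_of_bdd_left C
    (hK.comp continuous_snd).aestronglyMeasurable ?_ (hf.comp_fst _)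
  rw [Measure.prod_restrict]
  exact (ae_restrict_mem (measurableSet_Ioc.prod measurableSet_Ioc)).mono
    fun p hp => hC p.2 (Ioc_subset_Icc_self hp.2)

theorem integral_apply_eq_sub_integral_deriv_apply [CompleteSpace E] [CompleteSpace F]
    {K K' : ℝ → E →L[ℝ] F} {f F₀ : ℝ → E}
    {a b : ℝ} (hab : a ≤ b) (hK : ∀ s, HasDerivAt K (K' s) s) (hK' : Continuous K')
    (hf : IntervalIntegrable f volume a b)
    (hF : ∀ s ∈ Icc a b, F₀ s = F₀ a + ∫ u in a..s, f u) :
    ∫ u in a..b, K u (f u) = K b (F₀ b) - K a (F₀ a) - ∫ s in a..b, K' s (F₀ s) := by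
  have hKc : Continuous K := continuous_iff_continuousAt.2 fun s => (hK s).continuousAt
  have ftc : ∀ u w, ∫ s in u..b, K' s w = K b w - K u w := fun u w =>
    intervalIntegral.integral_eq_sub_of_hasDerivAt
      (fun s _ => by simpa using (hK s).clm_apply (hasDerivAt_const s w))
      ((hK'.clm_apply continuous_const).intervalIntegrable _ _)
  have hFc : ContinuousOn F₀ (uIcc a b) := by
    refine ((continuousOn_const (c := F₀ a)).add
      (intervalIntegral.continuousOn_primitive_interval' hf left_mem_uIcc)).congr fun s hs => ?_
    exact hF s (by rwa [uIcc_of_le hab] at hs)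
  have outer : ∫ u in a..b, ∫ s in u..b, K' s (f u) =
      K b (F₀ b - F₀ a) - ∫ u in a..b, K u (f u) := by
    simp_rw [ftc]
    rw [intervalIntegral.integral_sub (hf.clm_apply_of_continuous continuous_const)
      (hf.clm_apply_of_continuous hKc), ContinuousLinearMap.intervalIntegral_comp_comm _ hf,
      hF b ⟨hab, le_rfl⟩, add_sub_cancel_left]
  have inner : ∫ s in a..b, ∫ u in a..s, K' s (f u) =
      (∫ s in a..b, K' s (F₀ s)) - (K b (F₀ a) - K a (F₀ a)) := by
    have pointwise : EqOn (fun s => ∫ u in a..s, K' s (f u))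
        (fun s => K' s (F₀ s) - K' s (F₀ a)) (uIcc a b) := fun s hs => by
      dsimp only
      rw [ContinuousLinearMap.intervalIntegral_comp_comm _
        (hf.mono_set (uIcc_subset_uIcc_left hs)), hF s (by rwa [uIcc_of_le hab] at hs), ← map_sub,
        add_sub_cancel_left]
    rw [intervalIntegral.integral_congr pointwise, intervalIntegral.integral_sub
      (hK'.continuousOn.clm_apply hFc).intervalIntegrable
      ((hK'.clm_apply continuous_const).intervalIntegrable _ _), ftc a]
  have swap := intervalIntegral_intervalIntegral_swap_triangle (f := fun u s => K' s (f u)) hab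
    (integrable_prod_clm_apply hK' ((intervalIntegrable_iff_integrableOn_Ioc_of_le hab).1 hf))
  rw [outer, inner, map_sub] at swap
  linear_combination (norm := module) -swap

theorem integral_exp_smul_apply_eq_sub_of_eq_add_integral [CompleteSpace E] {L : E →L[ℝ] E}
    {y h : ℝ → E} {a b : ℝ} (hab : a ≤ b) (hy : ContinuousOn y (Icc a b))
    (hh : IntervalIntegrable h volume a b)
    (hsol : ∀ s ∈ Icc a b, y s = y a + ∫ u in a..s, (L (y u) + h u)) :
    ∫ s in a..b, exp ((b - s) • L) (h s) = y b - exp ((b - a) • L) (y a) := by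
  set K : ℝ → E →L[ℝ] E := fun s => exp ((b - s) • L)
  have hK : ∀ s, HasDerivAt K (-(L * K s)) s := fun s => by
    simpa [K, Function.comp_def] using
      (hasDerivAt_exp_smul_const' L (b - s)).scomp s ((hasDerivAt_id s).const_sub b)
  have hKc : Continuous K := continuous_iff_continuousAt.2 fun s => (hK s).continuousAt
  have hLy : IntervalIntegrable (fun u => L (y u)) volume a b :=
    (L.continuous.comp_continuousOn (by rwa [uIcc_of_le hab])).intervalIntegrable
  have ibp := integral_apply_eq_sub_integral_deriv_apply hab hK (continuous_const.mul hKc).neg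
    (hLy.add hh) hsol
  have hcomm : ∀ s, (-(L * K s)) (y s) = -K s (L (y s)) := fun s => by
    rw [((Commute.refl L).smul_right (b - s)).exp_right.eq]
    rfl
  simp only [hcomm, map_add, intervalIntegral.integral_neg] at ibp
  rw [intervalIntegral.integral_add (hLy.clm_apply_of_continuous hKc)
    (hh.clm_apply_of_continuous hKc)] at ibp
  simp only [K, sub_self, zero_smul, exp_zero, one_apply_eq_self] at ibp
  linear_combination (norm := module) ibp

end

theorem Matrix.toEuclideanCLM_exp {ι : Type*} [Fintype ι] [DecidableEq ι]
    (M : Matrix ι ι ℝ) :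
    Matrix.toEuclideanCLM (𝕜 := ℝ) (exp M) = exp (Matrix.toEuclideanCLM (𝕜 := ℝ) M) := by
  have hc : Continuous (Matrix.toEuclideanCLM (𝕜 := ℝ) (n := ι)) :=
    (Matrix.toEuclideanCLM (𝕜 := ℝ) (n := ι)).toAlgEquiv.toLinearMap
      |>.continuous_of_finiteDimensional
  -- `map_exp` needs a Banach-algebra norm on matrices; any one will do.
  open scoped Norms.Operator in
  exact map_exp _ hc M

theorem mv_eq_toEuclideanCLM {n : ℕ} (M : Matrix (Fin n) (Fin n) ℝ) :
    mv M = Matrix.toEuclideanCLM (𝕜 := ℝ) M :=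
  rfl

theorem toEuclideanCLM_mexp {n : ℕ} (A : Matrix (Fin n) (Fin n) ℝ) (t : ℝ) :
    Matrix.toEuclideanCLM (𝕜 := ℝ) (mexp A t) =
      exp (t • Matrix.toEuclideanCLM (𝕜 := ℝ) A) := by
  rw [mexp, Matrix.toEuclideanCLM_exp, map_smul]

theorem intervalIntegrable_delay_term {n : ℕ} (C : Matrix (Fin n) (Fin n) ℝ) {r ε : ℝ}
    (hε : 0 ≤ ε) {d q : ℝ → ℝ} (hd : Measurable d)
    (hd1 : ∀ t, 0 ≤ t → d t ∈ Icc (-1 : ℝ) 1) (hq : Measurable q)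
    (hq1 : ∀ t, 0 ≤ t → q t ∈ Icc (-1 : ℝ) 1) {x : ℝ → EuclideanSpace ℝ (Fin n)}
    (hxc : ContinuousOn x (Ici (-(r + ε)))) {T : ℝ} (hT : 0 ≤ T) :
    IntervalIntegrable (fun s => q s • mv C (x (s - r - ε * d s) - x (s - r))) volume 0 T := by
  obtain ⟨X, hXc, hXx⟩ := hxc.exists_continuous_eqOn_Ici
  let Φ : ℝ × ℝ × ℝ → EuclideanSpace ℝ (Fin n) := fun p =>
    p.2.1 • mv C (X (p.1 - r - ε * p.2.2) - X (p.1 - r))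
  have hΦ : Continuous Φ := by
    simp only [Φ, mv_eq_toEuclideanCLM]
    fun_prop
  refine (intervalIntegrable_comp_prodMk_of_continuous hΦ (hq.prodMk hd)
    (K := Icc (-1) 1 ×ˢ Icc (-1) 1) (isCompact_Icc.prod isCompact_Icc) fun s hs => ?_).congr
    fun s hs => ?_
  · rw [uIcc_of_le hT] at hs
    exact ⟨hq1 s hs.1, hd1 s hs.1⟩
  · rw [uIoc_of_le hT] at hs
    have hεd : ε * d s ≤ ε := mul_le_of_le_one_right hε (hd1 s hs.1.le).2
    simp only [Φ]
    rw [hXx (show -(r + ε) ≤ s - r - ε * d s by linarith [hs.1]),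
      hXx (show -(r + ε) ≤ s - r by linarith [hs.1])]

theorem stmt_12 (n : ℕ) (A C : Matrix (Fin n) (Fin n) ℝ)
    (r ε : ℝ) (hε : 0 ≤ ε) (hεr : ε ≤ r)
    (d q : ℝ → ℝ) (hd : Measurable d) (hd1 : ∀ t, 0 ≤ t → d t ∈ Set.Icc (-1 : ℝ) 1)
    (hq : Measurable q) (hq1 : ∀ t, 0 ≤ t → q t ∈ Set.Icc (-1 : ℝ) 1)
    (x : ℝ → EuclideanSpace ℝ (Fin n))
    (hxc : ContinuousOn x (Set.Ici (-(r + ε))))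
    (hxode : ∀ t : ℝ, 0 ≤ t →
      x t = x 0 + ∫ s in (0 : ℝ)..t,
        (mv A (x s) + q s • mv C (x (s - r - ε * d s) - x (s - r))))
    (v : ℝ → EuclideanSpace ℝ (Fin n))
    (hv : ∀ t : ℝ, 0 ≤ t → v t = x (t - r) - x (t - r - ε * d t)) :
    ∀ᵐ t ∂(volume.restrict (Set.Ici r)), d t ≤ 0 →
      -v t = mv (mexp A (ε * |d t|) - 1) (x (t - r)) -
        ∫ s in (t - r)..(t - r - ε * d t),
          mv (mexp A (t - r - ε * d t - s)) (q s • mv C (v s)) := by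
  have hr : 0 ≤ r := hε.trans hεr
  set L := Matrix.toEuclideanCLM (𝕜 := ℝ) A
  set h := fun s => q s • mv C (x (s - r - ε * d s) - x (s - r))
  have hh : ∀ T, 0 ≤ T → IntervalIntegrable h volume 0 T := fun T hT =>
    intervalIntegrable_delay_term C hε hd hd1 hq hq1 hxc hT
  have hxc' : ContinuousOn x (Ici 0) := hxc.mono (Ici_subset_Ici.2 (by linarith))
  have hg : ∀ T, 0 ≤ T → IntervalIntegrable (fun s => L (x s) + h s) volume 0 T := fun T hT =>
    ((L.continuous.comp_continuousOn (hxc'.mono Icc_subset_Ici_self)).intervalIntegrable_of_Icc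
      hT).add (hh T hT)
  rw [ae_restrict_iff' measurableSet_Ici]
  refine ae_of_all _ fun t (ht : r ≤ t) hdt => ?_
  set a := t - r
  set b := t - r - ε * d t
  have ha : 0 ≤ a := sub_nonneg.2 ht
  have hab : a ≤ b := le_sub_self_iff _ |>.2 (mul_nonpos_of_nonneg_of_nonpos hε hdt)
  have hforcing := integral_exp_smul_apply_eq_sub_of_eq_add_integral (L := L) hab
    (hxc'.mono (Icc_subset_Ici_iff hab |>.2 ha)) ((hh a ha).symm.trans (hh b (ha.trans hab)))
    fun s hs => eq_add_integral_of_forall_eq_add_integral hxode hg ha hs.1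
  have hintegrand : ∀ s ∈ uIcc a b,
      mv (mexp A (b - s)) (q s • mv C (v s)) = -exp ((b - s) • L) (h s) := fun s hs => by
    rw [hv s (ha.trans (uIcc_of_le hab ▸ hs).1), mv_eq_toEuclideanCLM, toEuclideanCLM_mexp,
      ← map_neg, ← smul_neg, mv_eq_toEuclideanCLM, ← map_neg, neg_sub]
  rw [hv t (hr.trans ht), show ε * |d t| = b - a by rw [abs_of_nonpos hdt]; ring]
  change -(x a - x b) = _
  rw [intervalIntegral.integral_congr hintegrand, intervalIntegral.integral_neg, hforcing,
    mv_eq_toEuclideanCLM, map_sub, toEuclideanCLM_mexp, map_one, sub_apply, one_apply_eq_self]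
  abel
end
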